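/- For every x on the unit sphere of a Minkowski plane, there exists y on the unit sphere such that x is isosceles orthogonal to y, i.e. ‖x + y‖ = ‖x − y‖. -/

import Mathlib

/-! The function `y ↦ ‖x + y‖ - ‖x - y‖` is odd and continuous, and the unit sphere of a real
normed space of dimension at least two is connected and symmetric, so by the intermediate value
theorem the function vanishes somewhere on the sphere. -/

theorem IsPreconnected.exists_eq_zero_of_map_neg {E : Type*} [TopologicalSpace E] [Neg E]
    {s : Set E} {f : E → ℝ} (hs : IsPreconnected s) (hf : ContinuousOn f s)
    (hf_neg : ∀ y ∈ s, f (-y) = -f y) {y : E} (hy : y ∈ s) (hy_neg : -y ∈ s) :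
    ∃ z ∈ s, f z = 0 := by
  rcases le_total 0 (f y) with h | h
  · exact hs.intermediate_value hy_neg hy hf ⟨by linarith [hf_neg y hy], h⟩
  · exact hs.intermediate_value hy hy_neg hf ⟨h, by linarith [hf_neg y hy]⟩

theorem exists_norm_eq_one_norm_add_eq_norm_sub {E : Type*} [NormedAddCommGroup E]
    [NormedSpace ℝ E] (hE : 1 < Module.rank ℝ E) (x : E) :
    ∃ y : E, ‖y‖ = 1 ∧ ‖x + y‖ = ‖x - y‖ := by
  have : Nontrivial E := rank_pos_iff_nontrivial.mp (zero_lt_one.trans hE)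
  obtain ⟨y, hy⟩ := (NormedSpace.sphere_nonempty (x := (0 : E))).mpr zero_le_one
  have hsphere := (isPathConnected_sphere hE 0 zero_le_one).isConnected.isPreconnected
  have hf : ContinuousOn (fun y => ‖x + y‖ - ‖x - y‖) (Metric.sphere (0 : E) 1) := by
    fun_prop
  obtain ⟨z, hz, hz_zero⟩ := hsphere.exists_eq_zero_of_map_neg hf
    (fun y _ => by simp only [← sub_eq_add_neg, sub_neg_eq_add, neg_sub]) hy (by simpa using hy)
  exact ⟨z, by simpa using hz, sub_eq_zero.mp hz_zero⟩

theorem exists_isosceles_orthogonal_on_sphere_general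
    {M : Type*} [NormedAddCommGroup M] [NormedSpace ℝ M]
    (hdim : Module.finrank ℝ M = 2)
    (x : M) :
    ∃ y : M, ‖y‖ = 1 ∧ ‖x + y‖ = ‖x - y‖ :=
  exists_norm_eq_one_norm_add_eq_norm_sub
    (Module.one_lt_rank_of_one_lt_finrank (by omega)) x

theorem exists_isosceles_orthogonal_on_sphere
    {M : Type*} [NormedAddCommGroup M] [NormedSpace ℝ M]
    (hdim : Module.finrank ℝ M = 2)
    (x : M) (hx : ‖x‖ = 1) :
    ∃ y : M, ‖y‖ = 1 ∧ ‖x + y‖ = ‖x - y‖ :=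
  exists_isosceles_orthogonal_on_sphere_general hdim x
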